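/- arXiv:2105.09622 — 3 statements merged into one kernel-verified Lean document; each statement's English description precedes it below -/
import Mathlib

section
/- In a symmetric algebra H, the element z = Σ_i C_i x Cⁱ is central for every x ∈ H: z h = h z for all h ∈ H. -/
/-! The trace expands every element in the basis `C` with coefficients `τ (y * D i)` and, by
symmetry of `τ`, also in the family `D` with coefficients `τ (C i * y)`. Expanding `D i * h` in
`D` and `h * C j` in `C` writes `z * h` and `h * z`, for `z = ∑ i, C i * x * D i`, as sums of
`C i * x * D j` with coefficients `τ (C j * D i * h)` and `τ (h * C j * D i)`, equal by
symmetry. -/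

open Finset

namespace Module.Basis

variable {A H ι : Type*} [CommSemiring A] [Semiring H] [Algebra A H] [Fintype ι] [DecidableEq ι]
  {τ : H →ₗ[A] A} {C : Basis ι A H} {D : ι → H}

theorem repr_eq_trace_mul_of_dual (hdual : ∀ i j, τ (C i * D j) = if i = j then 1 else 0)
    (y : H) (j : ι) : C.repr y j = τ (y * D j) := by
  conv_rhs => rw [← C.sum_repr y]
  simp only [sum_mul, smul_mul_assoc, map_sum, map_smul, hdual, smul_eq_mul, mul_ite, mul_one,
    mul_zero, sum_ite_eq', mem_univ, if_true]

theorem sum_trace_mul_dual_smul (hdual : ∀ i j, τ (C i * D j) = if i = j then 1 else 0)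
    (y : H) : ∑ i, τ (y * D i) • C i = y := by
  simpa only [repr_eq_trace_mul_of_dual hdual] using C.sum_repr y

theorem trace_mul_sum_trace_smul_dual (hdual : ∀ i j, τ (C i * D j) = if i = j then 1 else 0)
    (y z : H) : τ (z * ∑ i, τ (C i * y) • D i) = τ (z * y) := by
  conv_rhs => rw [← sum_trace_mul_dual_smul hdual z]
  simp only [mul_sum, sum_mul, mul_smul_comm, smul_mul_assoc, map_sum, map_smul, smul_eq_mul,
    mul_comm]

theorem sum_trace_mul_smul_dual (htr : ∀ a b : H, τ (a * b) = τ (b * a))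
    (hdual : ∀ i j, τ (C i * D j) = if i = j then 1 else 0) (y : H) :
    ∑ i, τ (C i * y) • D i = y :=
  C.ext_elem fun j => by
    simp only [repr_eq_trace_mul_of_dual hdual, htr _ (D j), trace_mul_sum_trace_smul_dual hdual]

end Module.Basis

open Module.Basis

/-- In a symmetric algebra `H` with symmetrizing trace `τ`, basis
`(C_i)` and trace-dual basis `(Cⁱ)`, the element `z = Σ_i C_i x Cⁱ` is central for
every `x ∈ H`: `z h = h z` for all `h ∈ H`. -/
theorem symmetric_algebra_casimir_central {A H ι : Type*}
    [CommRing A] [Ring H] [Algebra A H] [Fintype ι] [DecidableEq ι]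
    (τ : H →ₗ[A] A) (htr : ∀ a b : H, τ (a * b) = τ (b * a))
    (C : Module.Basis ι A H) (D : ι → H)
    (hdual : ∀ i j, τ (C i * D j) = if i = j then 1 else 0) :
    ∀ x h : H, (∑ i, C i * x * D i) * h = h * (∑ i, C i * x * D i) := by
  intro x h
  have expand_right :
      (∑ i, C i * x * D i) * h = ∑ i, ∑ j, τ (C j * (D i * h)) • (C i * x * D j) := by
    refine sum_mul .. |>.trans <| sum_congr rfl fun i _ => ?_
    conv_lhs => rw [mul_assoc, ← sum_trace_mul_smul_dual htr hdual (D i * h)]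
    simp only [mul_sum, mul_smul_comm, mul_assoc]
  have expand_left :
      h * (∑ i, C i * x * D i) = ∑ j, ∑ i, τ (h * (C j * D i)) • (C i * x * D j) := by
    refine mul_sum .. |>.trans <| sum_congr rfl fun j _ => ?_
    conv_lhs => rw [← mul_assoc, ← mul_assoc, ← sum_trace_mul_dual_smul hdual (h * C j)]
    simp only [sum_mul, smul_mul_assoc, mul_assoc]
  rw [expand_right, expand_left, sum_comm]
  simp only [htr h, mul_assoc]
end

section
/- For the dihedral Coxeter group I_2(m) with m = 2l+1 odd and l ≥ 5, the constant term of the genus-0 three-puncture invariant P(q) = s_0(q)·1 + s_{l+1}(q)·1 + Σ_{j=1}^{l} 2³ s_j(q) — that is, the expression 2 − 8m Σ_{j=1}^{l} cos(2πj/m)/(1 − cos(2πj/m)) — is strictly negative. -/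
open Real

set_option maxHeartbeats 1000000 in
/-- For the dihedral group `I₂(m)` with `m = 2l+1` odd and `l ≥ 5`, the
constant term of the genus-0 three-puncture invariant, namely
`2 - 8m Σ_{j=1}^{l} cos(2πj/m)/(1 - cos(2πj/m))`, is strictly negative. -/
theorem dihedral_odd_constant_term_negative (l : ℕ) (hl : 5 ≤ l) :
    2 - 8 * ((2 * l + 1 : ℕ) : ℝ) *
        ∑ j ∈ Finset.Icc 1 l,
          Real.cos (2 * Real.pi * j / ((2 * l + 1 : ℕ) : ℝ)) /
            (1 - Real.cos (2 * Real.pi * j / ((2 * l + 1 : ℕ) : ℝ))) < 0 := by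
  have hm : ((2 * l + 1 : ℕ) : ℝ) = 2 * (l : ℝ) + 1 := by push_cast; ring
  set m : ℝ := ((2 * l + 1 : ℕ) : ℝ) with hmdef
  have hl' : (5 : ℝ) ≤ (l : ℝ) := by exact_mod_cast hl
  have hmpos : (0 : ℝ) < m := by rw [hm]; linarith
  have hm11 : (11 : ℝ) ≤ m := by rw [hm]; linarith
  have hpi : Real.pi < 3.15 := Real.pi_lt_d2
  have hpi0 : (0 : ℝ) < Real.pi := Real.pi_pos
  -- each term is ≥ -1 (since 1 - cos θ_j > 0 and cos θ_j ≥ -1)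
  have hcos_lt_one : ∀ j ∈ Finset.Icc 1 l,
      Real.cos (2 * Real.pi * j / m) < 1 := by
    intro j hj
    rw [Finset.mem_Icc] at hj
    have hj1 : (1 : ℝ) ≤ (j : ℝ) := by exact_mod_cast hj.1
    have hjl : (j : ℝ) ≤ (l : ℝ) := by exact_mod_cast hj.2
    have hθpos : 0 < 2 * Real.pi * j / m := by positivity
    have hθle : 2 * Real.pi * j / m ≤ Real.pi := by
      rw [div_le_iff₀ hmpos, hm]
      nlinarith
    have := Real.cos_lt_cos_of_nonneg_of_le_pi (le_refl 0) hθle hθpos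
    simpa using this
  have hterm : ∀ j ∈ Finset.Icc 1 l,
      (-1 : ℝ) ≤ Real.cos (2 * Real.pi * j / m) /
        (1 - Real.cos (2 * Real.pi * j / m)) := by
    intro j hj
    have h1 : 0 < 1 - Real.cos (2 * Real.pi * j / m) := by
      linarith [hcos_lt_one j hj]
    rw [le_div_iff₀ h1]
    nlinarith [Real.neg_one_le_cos (2 * Real.pi * j / m)]
  have hins : Finset.Icc 1 l = insert 1 (Finset.Icc 2 l) := by
    ext x
    simp only [Finset.mem_Icc, Finset.mem_insert]
    omega
  have h1mem : (1 : ℕ) ∈ Finset.Icc 1 l := by simp; omega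
  -- bound on the first term
  set θ : ℝ := 2 * Real.pi * ((1 : ℕ) : ℝ) / m with hθdef
  have hθ : θ = 2 * Real.pi / m := by rw [hθdef]; push_cast; ring
  have hθpos : 0 < θ := by rw [hθ]; positivity
  have hθlt : θ < 0.6 := by
    rw [hθ, div_lt_iff₀ hmpos]
    nlinarith
  have hcosθ_lb : 1 - θ ^ 2 / 2 ≤ Real.cos θ := Real.one_sub_sq_div_two_le_cos
  have hcosθ_lt1 : Real.cos θ < 1 := hcos_lt_one 1 h1mem
  have hden : 0 < 1 - Real.cos θ := by linarith
  have hdenle : 1 - Real.cos θ ≤ θ ^ 2 / 2 := by linarith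
  have hθsq_pos : 0 < θ ^ 2 / 2 := by positivity
  have hT1 : (1 - θ ^ 2 / 2) / (θ ^ 2 / 2) ≤ Real.cos θ / (1 - Real.cos θ) := by
    have hnum : (0:ℝ) ≤ 1 - θ ^ 2 / 2 := by nlinarith
    apply div_le_div₀ (by linarith : (0:ℝ) ≤ Real.cos θ)
      (by linarith) hden hdenle
  have hθsq : θ ^ 2 / 2 = 2 * Real.pi ^ 2 / m ^ 2 := by
    rw [hθ]; field_simp
  have hT1' : m ^ 2 / (2 * Real.pi ^ 2) - 1 ≤ Real.cos θ / (1 - Real.cos θ) := by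
    have heq : (1 - θ ^ 2 / 2) / (θ ^ 2 / 2) = m ^ 2 / (2 * Real.pi ^ 2) - 1 := by
      rw [hθsq]
      field_simp
    linarith [heq ▸ hT1]
  -- assemble
  have hsum : (m ^ 2 / (2 * Real.pi ^ 2) - 1) - ((l : ℝ) - 1) ≤
      ∑ j ∈ Finset.Icc 1 l,
        Real.cos (2 * Real.pi * j / m) / (1 - Real.cos (2 * Real.pi * j / m)) := by
    rw [hins, Finset.sum_insert (by simp)]
    have hstep : ∀ j ∈ Finset.Icc 2 l, (-1 : ℝ) ≤
        Real.cos (2 * Real.pi * j / m) / (1 - Real.cos (2 * Real.pi * j / m)) := by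
      intro j hj
      apply hterm
      simp only [Finset.mem_Icc] at hj ⊢
      omega
    have h := Finset.sum_le_sum hstep
    rw [Finset.sum_const, Nat.card_Icc, nsmul_eq_mul] at h
    have hc : ((l + 1 - 2 : ℕ) : ℝ) = (l : ℝ) - 1 := by
      have h2 : l + 1 - 2 = l - 1 := by omega
      rw [h2, Nat.cast_sub (by omega : 1 ≤ l)]
      push_cast
      ring
    rw [hc] at h
    have := hT1'
    rw [← hθdef]
    linarith
  -- final numeric inequality
  have hpi2 : Real.pi ^ 2 < 10 := by nlinarith
  have hkey : 2 - 8 * m * ((m ^ 2 / (2 * Real.pi ^ 2) - 1) - ((l : ℝ) - 1)) < 0 := by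
    have h1 : m ^ 2 / 20 ≤ m ^ 2 / (2 * Real.pi ^ 2) := by
      apply div_le_div_of_nonneg_left (by positivity) (by positivity) (by nlinarith)
    have hpoly : (0:ℝ) < (2*(l:ℝ)+1) * (4*(l:ℝ)^2 - 16*(l:ℝ) + 1) - 5 := by
      nlinarith [sq_nonneg ((l : ℝ) - 5), mul_nonneg (sub_nonneg.2 hl') (sq_nonneg ((l:ℝ) - 5))]
    have h2 : 2 - 8 * m * ((m ^ 2 / 20 - 1) - ((l : ℝ) - 1)) < 0 := by
      rw [hm]
      have hid : 2 - 8 * (2*(l:ℝ)+1) * (((2*(l:ℝ)+1) ^ 2 / 20 - 1) - ((l:ℝ) - 1))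
          = 2 - (2/5) * ((2*(l:ℝ)+1) * (4*(l:ℝ)^2 - 16*(l:ℝ) + 1)) := by ring
      rw [hid]
      linarith
    have hY : ((m ^ 2 / 20 - 1) - ((l : ℝ) - 1)) ≤
        ((m ^ 2 / (2 * Real.pi ^ 2) - 1) - ((l : ℝ) - 1)) := by linarith
    have h3 := mul_le_mul_of_nonneg_left hY (by positivity : (0:ℝ) ≤ 8 * m)
    linarith
  have hfin := mul_le_mul_of_nonneg_left hsum (by positivity : (0:ℝ) ≤ 8 * m)
  linarith
end

section
/- The product of two positive log-concave finite sequences of coefficients (as polynomials) is positive and log-concave; consequently, any product of quantum integers [n]_q = 1 + q + ... + q^{n−1} has a log-concave, positive coefficient sequence. -/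
/-- A polynomial has a positive coefficient sequence (no internal zeros) if all
coefficients up to its degree are positive. -/
def PosCoeffs (P : Polynomial ℤ) : Prop :=
  ∀ i ≤ P.natDegree, 0 < P.coeff i

/-- A polynomial has a log-concave coefficient sequence if `a_i² ≥ a_{i-1} a_{i+1}`. -/
def LogConcaveCoeffs (P : Polynomial ℤ) : Prop :=
  ∀ i : ℕ, 1 ≤ i → P.coeff (i - 1) * P.coeff (i + 1) ≤ P.coeff i ^ 2

/-- The quantum integer `[n]_q = 1 + q + ⋯ + q^{n-1}` as a polynomial. -/
noncomputable def quantumInt (n : ℕ) : Polynomial ℤ :=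
  ∑ i ∈ Finset.range n, Polynomial.X ^ i

/-!
Extended by zero to `ℤ`, the coefficients `a` of a polynomial with positive log-concave
coefficients satisfy `a (s - 1) * a (t + 1) ≤ a s * a t` for all `s ≤ t`, i.e. the 2 × 2 minors
with adjacent rows of the Toeplitz matrix `(a (i - j))` are nonnegative. The coefficients `c` of a
product are the convolution of those of the factors, whose Toeplitz matrix is the product of
theirs; the Cauchy–Binet formula then writes `c m ^ 2 - c (m - 1) * c (m + 1)` as a sum of
products of such minors of the two factors, so it is nonnegative.
-/

open Polynomial LaurentPolynomial Finset

section CauchyBinet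

variable {ι R : Type*} [LinearOrder ι] [CommRing R]

theorem Finset.sum_sum_eq_sum_sum_lt_add_swap (s : Finset ι) (G : ι → ι → R)
    (hG : ∀ k, G k k = 0) :
    ∑ k ∈ s, ∑ l ∈ s, G k l = ∑ k ∈ s, ∑ l ∈ s with k < l, (G k l + G l k) := by
  have hsplit (k l : ι) :
      G k l = (if k < l then G k l else 0) + (if l < k then G k l else 0) := by
    rcases lt_trichotomy k l with h | rfl | h
    · simp [h, h.not_gt]
    · simp [hG]
    · simp [h, h.not_gt]
  calc ∑ k ∈ s, ∑ l ∈ s, G k l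
      = ∑ k ∈ s, ∑ l ∈ s, (if k < l then G k l else 0)
        + ∑ k ∈ s, ∑ l ∈ s, (if l < k then G k l else 0) := by
        rw [← sum_add_distrib]
        refine sum_congr rfl fun k _ => ?_
        rw [← sum_add_distrib]
        exact sum_congr rfl fun l _ => hsplit k l
    _ = ∑ k ∈ s, ∑ l ∈ s, (if k < l then G k l else 0)
        + ∑ k ∈ s, ∑ l ∈ s, (if k < l then G l k else 0) := by
        congr 1
        exact sum_comm
    _ = ∑ k ∈ s, ∑ l ∈ s with k < l, (G k l + G l k) := by
        simp only [sum_filter, ← sum_add_distrib, ← ite_add_zero]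

/-- The Cauchy–Binet formula for the product of a `2 × s` and an `s × 2` matrix. -/
theorem Finset.sum_mul_sum_sub_sum_mul_sum (s : Finset ι) (x₁ x₂ y₁ y₂ : ι → R) :
    (∑ k ∈ s, x₁ k * y₁ k) * (∑ k ∈ s, x₂ k * y₂ k)
      - (∑ k ∈ s, x₁ k * y₂ k) * (∑ k ∈ s, x₂ k * y₁ k) =
      ∑ k ∈ s, ∑ l ∈ s with k < l,
        (x₁ k * x₂ l - x₁ l * x₂ k) * (y₁ k * y₂ l - y₁ l * y₂ k) := by
  rw [sum_mul_sum, sum_mul_sum, ← sum_sub_distrib]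
  calc ∑ k ∈ s,
        (∑ l ∈ s, x₁ k * y₁ k * (x₂ l * y₂ l) - ∑ l ∈ s, x₁ k * y₂ k * (x₂ l * y₁ l))
      = ∑ k ∈ s, ∑ l ∈ s, x₁ k * x₂ l * (y₁ k * y₂ l - y₁ l * y₂ k) := by
        refine sum_congr rfl fun k _ => ?_
        rw [← sum_sub_distrib]
        exact sum_congr rfl fun l _ => by ring
    _ = _ := by
        rw [sum_sum_eq_sum_sum_lt_add_swap _ _ fun k => by ring]
        exact sum_congr rfl fun k _ => sum_congr rfl fun l _ => by ring

end CauchyBinet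

section PF2

variable {R : Type*} [CommRing R] [LinearOrder R] [IsStrictOrderedRing R]

/-- The minors with two adjacent rows of the Toeplitz matrix `(f (i - j))` are nonnegative. -/
def IsPF2 (f : ℤ → R) : Prop :=
  ∀ s t, s ≤ t → f (s - 1) * f (t + 1) ≤ f s * f t

/-- The ratios `f (n + 1) / f n` decrease along the support of `f`, which is an interval. -/
theorem isPF2_of_logConcave {f : ℤ → R} (hf : ∀ n, 0 ≤ f n)
    (hconn : (Function.support f).OrdConnected)
    (hlc : ∀ n, f (n - 1) * f (n + 1) ≤ f n ^ 2) : IsPF2 f := by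
  intro s t hst
  rcases (hf (s - 1)).eq_or_lt with hs | hs
  · rw [← hs, zero_mul]
    exact mul_nonneg (hf s) (hf t)
  rcases (hf (t + 1)).eq_or_lt with ht | ht
  · rw [← ht, mul_zero]
    exact mul_nonneg (hf s) (hf t)
  have hpos : ∀ n, s - 1 ≤ n → n ≤ t + 1 → 0 < f n := fun n h₁ h₂ =>
    (hf n).lt_of_ne' (hconn.out hs.ne' ht.ne' ⟨h₁, h₂⟩)
  induction t, hst using Int.leInduction with
  | base => simpa [sq] using hlc s
  | succ t hst ih =>
    have hft : 0 < f t := hpos t (by omega) (by omega)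
    have hft₁ : 0 < f (t + 1) := hpos (t + 1) (by omega) (by omega)
    have hprev := ih hft₁ fun n h₁ h₂ => hpos n h₁ (by omega)
    have hlc_t : f t * f (t + 1 + 1) ≤ f (t + 1) ^ 2 := by simpa using hlc (t + 1)
    refine le_of_mul_le_mul_right ?_ hft
    calc f (s - 1) * f (t + 1 + 1) * f t = f (s - 1) * (f t * f (t + 1 + 1)) := by ring
      _ ≤ f (s - 1) * f (t + 1) ^ 2 := mul_le_mul_of_nonneg_left hlc_t hs.le
      _ = f (s - 1) * f (t + 1) * f (t + 1) := by ring
      _ ≤ f s * f t * f (t + 1) := mul_le_mul_of_nonneg_right hprev hft₁.le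
      _ = f s * f (t + 1) * f t := by ring

end PF2

namespace LaurentPolynomial

theorem coeff_mul_eq_finsum {R : Type*} [Semiring R] (p q : R[T;T⁻¹]) (n : ℤ) :
    (p * q).coeff n = ∑ᶠ k, p.coeff k * q.coeff (n - k) := by
  have hsupp : Function.support (fun k => p.coeff k * q.coeff (n - k)) ⊆ p.coeff.support :=
    fun k hk => Finsupp.mem_support_iff.2 (left_ne_zero_of_mul hk)
  rw [AddMonoidAlgebra.coeff_mul_apply_left, finsum_eq_sum_of_support_subset _ hsupp]
  exact sum_congr rfl fun k _ => by simp only [neg_add_eq_sub]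

theorem coeff_mul_eq_finsum_sub_one {R : Type*} [Semiring R] (p q : R[T;T⁻¹]) (n : ℤ) :
    (p * q).coeff n = ∑ᶠ k, p.coeff (k - 1) * q.coeff (n + 1 - k) := by
  rw [coeff_mul_eq_finsum, ← finsum_comp_equiv (Equiv.subRight 1)]
  exact finsum_congr fun k => by simp only [Equiv.subRight_apply, sub_sub_eq_add_sub]

variable {R : Type*} [CommRing R] [LinearOrder R] [IsStrictOrderedRing R]

theorem coeff_mul_sub_one_mul_coeff_mul_add_one_le_sq {p q : R[T;T⁻¹]} (hp : IsPF2 p.coeff)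
    (hq : IsPF2 q.coeff) (m : ℤ) :
    (p * q).coeff (m - 1) * (p * q).coeff (m + 1) ≤ (p * q).coeff m ^ 2 := by
  let S := p.coeff.support ∪ p.coeff.support.map (addRightEmbedding 1)
  have hc (n : ℤ) : (p * q).coeff n = ∑ k ∈ S, p.coeff k * q.coeff (n - k) := by
    rw [coeff_mul_eq_finsum]
    exact finsum_eq_sum_of_support_subset _ fun k hk =>
      mem_union_left _ (Finsupp.mem_support_iff.2 (left_ne_zero_of_mul hk))
  have hc' (n : ℤ) : (p * q).coeff n = ∑ k ∈ S, p.coeff (k - 1) * q.coeff (n + 1 - k) := by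
    rw [coeff_mul_eq_finsum_sub_one]
    exact finsum_eq_sum_of_support_subset _ fun k hk => mem_union_right _ <|
      mem_map.2 ⟨k - 1, Finsupp.mem_support_iff.2 (left_ne_zero_of_mul hk), sub_add_cancel k 1⟩
  have hminors : ∀ k l, k < l →
      0 ≤ (p.coeff k * p.coeff (l - 1) - p.coeff l * p.coeff (k - 1)) *
        (q.coeff (m - k) * q.coeff (m + 1 - l) - q.coeff (m - l) * q.coeff (m + 1 - k)) := by
    intro k l hkl
    have hpkl := hp k (l - 1) (by omega)
    have hqkl := hq (m + 1 - l) (m - k) (by omega)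
    rw [sub_add_cancel, mul_comm (p.coeff (k - 1))] at hpkl
    rw [show m + 1 - l - 1 = m - l by ring, show m - k + 1 = m + 1 - k by ring,
      mul_comm (q.coeff (m + 1 - l))] at hqkl
    exact mul_nonneg (sub_nonneg.2 hpkl) (sub_nonneg.2 hqkl)
  calc (p * q).coeff (m - 1) * (p * q).coeff (m + 1)
      = (∑ k ∈ S, p.coeff k * q.coeff (m + 1 - k)) *
          ∑ k ∈ S, p.coeff (k - 1) * q.coeff (m - k) := by
        rw [hc (m + 1), hc' (m - 1), mul_comm, sub_add_cancel]
    _ ≤ (∑ k ∈ S, p.coeff k * q.coeff (m - k)) *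
          ∑ k ∈ S, p.coeff (k - 1) * q.coeff (m + 1 - k) := by
        rw [← sub_nonneg, sum_mul_sum_sub_sum_mul_sum]
        exact sum_nonneg fun k _ => sum_nonneg fun l hl => hminors k l (mem_filter.1 hl).2
    _ = (p * q).coeff m ^ 2 := by rw [← hc, ← hc', sq]

end LaurentPolynomial

namespace Polynomial

theorem coeff_toLaurent_natCast {R : Type*} [Semiring R] (P : R[X]) (n : ℕ) :
    (toLaurent P).coeff n = P.coeff n := by
  rw [coeff_toLaurent]
  exact Finsupp.mapDomain_apply Nat.castEmbedding.injective _ n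

theorem coeff_toLaurent_of_neg {R : Type*} [Semiring R] (P : R[X]) {n : ℤ} (hn : n < 0) :
    (toLaurent P).coeff n = 0 := by
  rw [coeff_toLaurent]
  refine Finsupp.mapDomain_of_notMem_range _ _ ?_
  rintro ⟨k, rfl⟩
  exact (Int.natCast_nonneg k).not_gt hn

end Polynomial

namespace PosCoeffs

variable {P Q : ℤ[X]}

theorem coeff_nonneg (hP : PosCoeffs P) (i : ℕ) : 0 ≤ P.coeff i := by
  rcases le_or_gt i P.natDegree with h | h
  · exact (hP i h).le
  · rw [coeff_eq_zero_of_natDegree_lt h]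

theorem ne_zero (hP : PosCoeffs P) : P ≠ 0 := by
  rintro rfl
  simpa using hP 0 le_rfl

theorem mul (hP : PosCoeffs P) (hQ : PosCoeffs Q) : PosCoeffs (P * Q) := by
  intro i hi
  rw [natDegree_mul hP.ne_zero hQ.ne_zero] at hi
  rw [coeff_mul]
  refine sum_pos' (fun x _ => mul_nonneg (hP.coeff_nonneg _) (hQ.coeff_nonneg _))
    ⟨(min i P.natDegree, i - min i P.natDegree), ?_, ?_⟩
  · rw [HasAntidiagonal.mem_antidiagonal]
    omega
  · exact mul_pos (hP _ (by omega)) (hQ _ (by omega))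

theorem isPF2_coeff_toLaurent (hP : PosCoeffs P) (hlc : LogConcaveCoeffs P) :
    IsPF2 (toLaurent P).coeff := by
  refine isPF2_of_logConcave (fun n => ?_) ?_ fun n => ?_
  · rcases lt_or_ge n 0 with hn | hn
    · rw [coeff_toLaurent_of_neg P hn]
    · lift n to ℕ using hn
      rw [coeff_toLaurent_natCast]
      exact hP.coeff_nonneg n
  · have hsupp : Function.support (toLaurent P).coeff = Set.Icc 0 (P.natDegree : ℤ) := by
      ext n
      rcases lt_or_ge n 0 with hn | hn
      · simp only [Function.mem_support, coeff_toLaurent_of_neg P hn, ne_eq, not_true_eq_false,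
          Set.mem_Icc, false_iff, not_and, not_le]
        omega
      · lift n to ℕ using hn
        simp only [Function.mem_support, coeff_toLaurent_natCast, Set.mem_Icc, Nat.cast_nonneg,
          true_and, Nat.cast_le]
        exact ⟨le_natDegree_of_ne_zero, fun h => (hP n h).ne'⟩
    rw [hsupp]
    exact Set.ordConnected_Icc
  · rcases lt_or_ge n 1 with hn | hn
    · rw [coeff_toLaurent_of_neg P (by omega), zero_mul]
      exact sq_nonneg _
    · obtain ⟨i, rfl⟩ : ∃ i : ℕ, n = i + 1 := ⟨(n - 1).toNat, by omega⟩
      simpa [← coeff_toLaurent_natCast] using hlc (i + 1) (by omega)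

end PosCoeffs

theorem LogConcaveCoeffs.mul {P Q : ℤ[X]} (hPp : PosCoeffs P) (hPl : LogConcaveCoeffs P)
    (hQp : PosCoeffs Q) (hQl : LogConcaveCoeffs Q) : LogConcaveCoeffs (P * Q) := by
  intro i hi
  have h := LaurentPolynomial.coeff_mul_sub_one_mul_coeff_mul_add_one_le_sq
    (hPp.isPF2_coeff_toLaurent hPl) (hQp.isPF2_coeff_toLaurent hQl) i
  rw [← map_mul toLaurent P Q, show (i : ℤ) - 1 = ((i - 1 : ℕ) : ℤ) by omega] at h
  simpa only [← Nat.cast_add_one, coeff_toLaurent_natCast] using h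

theorem posCoeffs_one : PosCoeffs 1 := by
  intro i hi
  rw [natDegree_one, Nat.le_zero] at hi
  simp [hi]

theorem logConcaveCoeffs_one : LogConcaveCoeffs 1 := by
  intro i hi
  rw [show (1 : ℤ[X]).coeff (i + 1) = 0 by rw [coeff_one, if_neg i.succ_ne_zero], mul_zero]
  exact sq_nonneg _

theorem coeff_quantumInt (n j : ℕ) : (quantumInt n).coeff j = if j < n then 1 else 0 := by
  simp [quantumInt, coeff_X_pow]

theorem posCoeffs_quantumInt {n : ℕ} (hn : 1 ≤ n) : PosCoeffs (quantumInt n) := by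
  intro i hi
  have hdeg : (quantumInt n).natDegree ≤ n - 1 :=
    natDegree_le_iff_coeff_eq_zero.2 fun j hj => by rw [coeff_quantumInt, if_neg (by omega)]
  rw [coeff_quantumInt, if_pos (by omega)]
  exact one_pos

theorem logConcaveCoeffs_quantumInt (n : ℕ) : LogConcaveCoeffs (quantumInt n) := by
  intro i hi
  simp only [coeff_quantumInt]
  split_ifs <;> omega

/-- The product of two polynomials with positive log-concave coefficient
sequences again has a positive log-concave coefficient sequence; consequently, any
finite product of quantum integers `[n]_q = 1 + q + ⋯ + q^{n-1}` (with `n ≥ 1`) has a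
positive (hence nonnegative) log-concave coefficient sequence. -/
theorem product_log_concave_and_quantum_integers :
    (∀ P Q : Polynomial ℤ, PosCoeffs P → LogConcaveCoeffs P →
      PosCoeffs Q → LogConcaveCoeffs Q →
      PosCoeffs (P * Q) ∧ LogConcaveCoeffs (P * Q)) ∧
    (∀ L : List ℕ, (∀ n ∈ L, 1 ≤ n) →
      PosCoeffs ((L.map quantumInt).prod) ∧ LogConcaveCoeffs ((L.map quantumInt).prod)) := by
  have hmul (P Q : ℤ[X]) (hPp : PosCoeffs P) (hPl : LogConcaveCoeffs P) (hQp : PosCoeffs Q)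
      (hQl : LogConcaveCoeffs Q) : PosCoeffs (P * Q) ∧ LogConcaveCoeffs (P * Q) :=
    ⟨hPp.mul hQp, hPl.mul hPp hQp hQl⟩
  refine ⟨hmul, fun L hL => List.prod_induction (fun P => PosCoeffs P ∧ LogConcaveCoeffs P)
    (fun P Q hP hQ => hmul P Q hP.1 hP.2 hQ.1 hQ.2) ⟨posCoeffs_one, logConcaveCoeffs_one⟩ ?_⟩
  simp only [List.mem_map]
  rintro _ ⟨n, hn, rfl⟩
  exact ⟨posCoeffs_quantumInt (hL n hn), logConcaveCoeffs_quantumInt n⟩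
end
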